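/- The inclusion ∼_W ⊆ ∼ is strict: there exists a WTS and states s, t such that s ∼ t (generalized weighted bisimilar) but s is not weighted bisimilar to t. Concretely, in the WTS with states {s, s', t, t'}, labels ℓ(s)=ℓ(t)={a}, ℓ(s')=ℓ(t')={b}, and transitions s —1→ s', s —2→ s', s —3→ s', t —1→ t', t —3→ t', one has s ∼ t but not s ∼_W t. -/
import Mathlib


open Classical

/-- A weighted transition system with states `S` and atomic propositions `AP`. -/
structure WTS (S AP : Type) where
  tr : S → NNReal → S → Prop
  label : S → Set AP

/-- The image set θ(s)(T) = {r | ∃ t ∈ T, s —r→ t}. -/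
def theta {S AP : Type} (M : WTS S AP) (s : S) (T : Set S) : Set NNReal :=
  {r | ∃ t ∈ T, M.tr s r t}

/-- θ⁻(s)(T): the infimum of the image set, or −∞ if it is empty. -/
noncomputable def thetaMin {S AP : Type} (M : WTS S AP) (s : S) (T : Set S) : EReal :=
  if theta M s T = ∅ then ⊥
  else sInf ((fun r : NNReal => ((r : ℝ) : EReal)) '' theta M s T)

/-- θ⁺(s)(T): the supremum of the image set, or ∞ if it is empty. -/
noncomputable def thetaMax {S AP : Type} (M : WTS S AP) (s : S) (T : Set S) : EReal :=
  if theta M s T = ∅ then ⊤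
  else sSup ((fun r : NNReal => ((r : ℝ) : EReal)) '' theta M s T)

/-- A generalized weighted bisimulation relation. -/
def IsGWBisim {S AP : Type} (M : WTS S AP) (R : S → S → Prop) : Prop :=
  Equivalence R ∧
    ∀ s t : S, R s t →
      M.label s = M.label t ∧
      ∀ T : Set S, (∃ u : S, T = {v | R u v}) →
        thetaMin M s T = thetaMin M t T ∧ thetaMax M s T = thetaMax M t T

/-- Generalized weighted bisimilarity ∼. -/
def gwBisimilar {S AP : Type} (M : WTS S AP) (s t : S) : Prop :=
  ∃ R : S → S → Prop, IsGWBisim M R ∧ R s t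

/-- A (classical) weighted bisimulation relation. -/
def IsWBisim {S AP : Type} (M : WTS S AP) (R : S → S → Prop) : Prop :=
  Equivalence R ∧
    ∀ s t : S, R s t →
      M.label s = M.label t ∧
      (∀ (r : NNReal) (s' : S), M.tr s r s' → ∃ t' : S, M.tr t r t' ∧ R s' t') ∧
      (∀ (r : NNReal) (t' : S), M.tr t r t' → ∃ s' : S, M.tr s r s' ∧ R s' t')

/-- Weighted bisimilarity ∼_W. -/
def wBisimilar {S AP : Type} (M : WTS S AP) (s t : S) : Prop :=
  ∃ R : S → S → Prop, IsWBisim M R ∧ R s t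

/-- The states of the counterexample WTS. -/
inductive St where
  | s | s' | t | t'
deriving DecidableEq

/-- The counterexample WTS: s —1→ s', s —2→ s', s —3→ s', t —1→ t', t —3→ t',
with ℓ(s) = ℓ(t) = {a} and ℓ(s') = ℓ(t') = {b}. -/
def exM : WTS St Bool where
  tr := fun x r y =>
    (x = .s ∧ y = .s' ∧ (r = 1 ∨ r = 2 ∨ r = 3)) ∨
    (x = .t ∧ y = .t' ∧ (r = 1 ∨ r = 3))
  label := fun x => match x with
    | .s => {true}
    | .t => {true}
    | .s' => {false}
    | .t' => {false}


/-- The candidate relation for generalized bisimulation. -/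
def exR : St → St → Prop := fun x y =>
  x = y ∨ (x = .s ∧ y = .t) ∨ (x = .t ∧ y = .s) ∨
  (x = .s' ∧ y = .t') ∨ (x = .t' ∧ y = .s')

lemma exR_equiv : Equivalence exR := by
  refine ⟨?_, ?_, ?_⟩
  · intro x; left; rfl
  · intro x y h; rcases h with h | h | h | h | h <;> simp_all [exR]
  · intro x y z h1 h2
    rcases h1 with h | h | h | h | h <;> rcases h2 with g | g | g | g | g <;>
      simp_all [exR]

lemma class_s : {v | exR St.s v} = {St.s, St.t} := by
  ext v; cases v <;> simp [exR]

lemma class_t : {v | exR St.t v} = {St.s, St.t} := by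
  ext v; cases v <;> simp [exR]

lemma class_s' : {v | exR St.s' v} = {St.s', St.t'} := by
  ext v; cases v <;> simp [exR]

lemma class_t' : {v | exR St.t' v} = {St.s', St.t'} := by
  ext v; cases v <;> simp [exR]

lemma theta_s_low : theta exM St.s {St.s, St.t} = ∅ := by
  ext r; simp [theta, exM]

lemma theta_t_low : theta exM St.t {St.s, St.t} = ∅ := by
  ext r; simp [theta, exM]

lemma theta_s'_empty : theta exM St.s' T = ∅ := by
  ext r; simp [theta, exM]

lemma theta_t'_empty : theta exM St.t' T = ∅ := by
  ext r; simp [theta, exM]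

lemma theta_s_hi : theta exM St.s {St.s', St.t'} = {1, 2, 3} := by
  ext r; simp [theta, exM]

lemma theta_t_hi : theta exM St.t {St.s', St.t'} = {1, 3} := by
  ext r; simp [theta, exM]

lemma img_s_hi : (fun r : NNReal => ((r : ℝ) : EReal)) '' {1, 2, 3}
    = {(1 : EReal), 2, 3} := by
  rw [Set.image_insert_eq, Set.image_insert_eq, Set.image_singleton]
  norm_cast

lemma img_t_hi : (fun r : NNReal => ((r : ℝ) : EReal)) '' {1, 3}
    = {(1 : EReal), 3} := by
  rw [Set.image_insert_eq, Set.image_singleton]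
  norm_cast

lemma e13 : (1 : EReal) ≤ 3 := by
  rw [show (1:EReal) = ((1:ℝ):EReal) by norm_cast, show (3:EReal) = ((3:ℝ):EReal) by norm_cast]
  exact EReal.coe_le_coe_iff.mpr (by norm_num)

lemma e12 : (1 : EReal) ≤ 2 := by
  rw [show (1:EReal) = ((1:ℝ):EReal) by norm_cast, show (2:EReal) = ((2:ℝ):EReal) by norm_cast]
  exact EReal.coe_le_coe_iff.mpr (by norm_num)

lemma e23 : (2 : EReal) ≤ 3 := by
  rw [show (2:EReal) = ((2:ℝ):EReal) by norm_cast, show (3:EReal) = ((3:ℝ):EReal) by norm_cast]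
  exact EReal.coe_le_coe_iff.mpr (by norm_num)

lemma sInf_13 : sInf ({(1 : EReal), 3} : Set EReal) = 1 := by
  rw [sInf_insert, sInf_singleton]
  exact min_eq_left e13

lemma sInf_123 : sInf ({(1 : EReal), 2, 3} : Set EReal) = 1 := by
  rw [sInf_insert, sInf_insert, sInf_singleton]
  rw [min_eq_left e23]
  exact min_eq_left e12

lemma sSup_13 : sSup ({(1 : EReal), 3} : Set EReal) = 3 := by
  rw [sSup_insert, sSup_singleton]
  exact max_eq_right e13

lemma sSup_123 : sSup ({(1 : EReal), 2, 3} : Set EReal) = 3 := by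
  rw [sSup_insert, sSup_insert, sSup_singleton]
  rw [max_eq_right e23]
  exact max_eq_right e13

lemma min_s_hi : thetaMin exM St.s {St.s', St.t'} = 1 := by
  rw [thetaMin, theta_s_hi, if_neg (Set.insert_nonempty _ _).ne_empty, img_s_hi, sInf_123]

lemma min_t_hi : thetaMin exM St.t {St.s', St.t'} = 1 := by
  rw [thetaMin, theta_t_hi, if_neg (Set.insert_nonempty _ _).ne_empty, img_t_hi, sInf_13]

lemma max_s_hi : thetaMax exM St.s {St.s', St.t'} = 3 := by
  rw [thetaMax, theta_s_hi, if_neg (Set.insert_nonempty _ _).ne_empty, img_s_hi, sSup_123]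

lemma max_t_hi : thetaMax exM St.t {St.s', St.t'} = 3 := by
  rw [thetaMax, theta_t_hi, if_neg (Set.insert_nonempty _ _).ne_empty, img_t_hi, sSup_13]

lemma theta_eq_sets :
    ∀ T : Set St, (∃ u : St, T = {v | exR u v}) →
      thetaMin exM St.s T = thetaMin exM St.t T ∧
      thetaMax exM St.s T = thetaMax exM St.t T := by
  rintro T ⟨u, rfl⟩
  cases u
  · rw [class_s]
    simp [thetaMin, thetaMax, theta_s_low, theta_t_low]
  · rw [class_s']
    rw [min_s_hi, min_t_hi, max_s_hi, max_t_hi]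
    exact ⟨rfl, rfl⟩
  · rw [class_t]
    simp [thetaMin, thetaMax, theta_s_low, theta_t_low]
  · rw [class_t']
    rw [min_s_hi, min_t_hi, max_s_hi, max_t_hi]
    exact ⟨rfl, rfl⟩

theorem strict_inclusion : gwBisimilar exM .s .t ∧ ¬ wBisimilar exM .s .t := by
  constructor
  · refine ⟨exR, ⟨exR_equiv, ?_⟩, by simp [exR]⟩
    intro a b hab
    have hlab : exM.label a = exM.label b := by
      rcases hab with h | h | h | h | h <;> simp_all [exM]
    refine ⟨hlab, ?_⟩
    intro T hT
    rcases hab with h | h | h | h | h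
    · subst h; exact ⟨rfl, rfl⟩
    · obtain ⟨rfl, rfl⟩ := h; exact theta_eq_sets T hT
    · obtain ⟨rfl, rfl⟩ := h
      obtain ⟨h1, h2⟩ := theta_eq_sets T hT
      exact ⟨h1.symm, h2.symm⟩
    · obtain ⟨rfl, rfl⟩ := h
      have hs : theta exM St.s' T = ∅ := theta_s'_empty
      have ht : theta exM St.t' T = ∅ := theta_t'_empty
      simp [thetaMin, thetaMax, hs, ht]
    · obtain ⟨rfl, rfl⟩ := h
      have hs : theta exM St.s' T = ∅ := theta_s'_empty
      have ht : theta exM St.t' T = ∅ := theta_t'_empty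
      simp [thetaMin, thetaMax, hs, ht]
  · rintro ⟨R, ⟨hEq, h⟩, hst⟩
    obtain ⟨_, hzig, _⟩ := h _ _ hst
    have htr : exM.tr St.s 2 St.s' := by simp [exM]
    obtain ⟨w, htr', _⟩ := hzig 2 St.s' htr
    have : (2 : NNReal) = 1 ∨ (2 : NNReal) = 3 := by
      rcases htr' with ⟨h1, _⟩ | ⟨_, _, h2⟩
      · exact absurd h1 (by simp)
      · exact h2
    rcases this with h | h
    · exact absurd h (by norm_num)
    · exact absurd h (by norm_num)
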